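/- If the consecution X ⊩ A is provable in the natural deduction system B, then X and A rseq-share a variable: some atom p has an occurrence in X and an occurrence in A that fall under the same reduced word. -/
import Mathlib


/-- Formulas of the language L, generated from atoms by ¬, ∧, ∨, →, ∘. -/
inductive Fml : Type
  | atom : ℕ → Fml
  | neg : Fml → Fml
  | conj : Fml → Fml → Fml
  | disj : Fml → Fml → Fml
  | imp : Fml → Fml → Fml
  | fus : Fml → Fml → Fml

/-- Bunches: formulas are the atomic bunches, closed under comma and semicolon. -/
inductive Bunch : Type
  | fml : Fml → Bunch
  | comma : Bunch → Bunch → Bunch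
  | semi : Bunch → Bunch → Bunch

/-- Bunch contexts: a bunch with one distinguished hole at a bunch position. -/
inductive Ctx : Type
  | hole : Ctx
  | commaL : Ctx → Bunch → Ctx
  | commaR : Bunch → Ctx → Ctx
  | semiL : Ctx → Bunch → Ctx
  | semiR : Bunch → Ctx → Ctx

/-- Filling the hole of a bunch context with a bunch. -/
def Ctx.fill : Ctx → Bunch → Bunch
  | .hole, X => X
  | .commaL c Y, X => .comma (c.fill X) Y
  | .commaR Y c, X => .comma Y (c.fill X)
  | .semiL c Y, X => .semi (c.fill X) Y
  | .semiR Y c, X => .semi Y (c.fill X)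

/-- The natural deduction system B; `NDB X A` means the consecution X ⊩ A is provable
(it has a derivation all of whose leaves are instances of (id)). -/
inductive NDB : Bunch → Fml → Prop
  | id (A) : NDB (.fml A) A
  | impI {X A B} : NDB (.semi X (.fml A)) B → NDB X (.imp A B)
  | impE {X Y A B} : NDB X (.imp A B) → NDB Y A → NDB (.semi X Y) B
  | orI1 {X A} (B) : NDB X A → NDB X (.disj A B)
  | orI2 {X B} (A) : NDB X B → NDB X (.disj A B)
  | orE {X A B C} {Y : Ctx} : NDB X (.disj A B) → NDB (Y.fill (.fml A)) C →
      NDB (Y.fill (.fml B)) C → NDB (Y.fill X) C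
  | andI {X Y A B} : NDB X A → NDB Y B → NDB (.comma X Y) (.conj A B)
  | andE {X A B C} {Y : Ctx} : NDB X (.conj A B) →
      NDB (Y.fill (.comma (.fml A) (.fml B))) C → NDB (Y.fill X) C
  | fusI {X Y A B} : NDB X A → NDB Y B → NDB (.semi X Y) (.fus A B)
  | fusE {X A B C} {Y : Ctx} : NDB X (.fus A B) →
      NDB (Y.fill (.semi (.fml A) (.fml B))) C → NDB (Y.fill X) C
  | negI {X A B} : NDB X B → NDB (.fml A) (.neg B) → NDB X (.neg A)
  | negE {X A} : NDB X (.neg (.neg A)) → NDB X A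
  | cut {X A B} {Y : Ctx} : NDB X A → NDB (Y.fill (.fml A)) B → NDB (Y.fill X) B
  | eB {W : Ctx} {X Y Z A} : NDB (W.fill (.comma X (.comma Y Z))) A →
      NDB (W.fill (.comma (.comma X Y) Z)) A
  | eC {W : Ctx} {X Y A} : NDB (W.fill (.comma X Y)) A → NDB (W.fill (.comma Y X)) A
  | eW {W : Ctx} {X A} : NDB (W.fill (.comma X X)) A → NDB (W.fill X) A
  | eK {W : Ctx} {X Y A} : NDB (W.fill X) A → NDB (W.fill (.comma X Y)) A

/-- The alphabet {l, r, λ, ρ, n}. -/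
inductive Alpha : Type
  | l | r | lam | rho | n
deriving DecidableEq

/-- Finite words over the alphabet. -/
abbrev Word := List Alpha

/-- Immediate reduction ↝′ on words: x̄lλȳ ↝′ x̄ρȳ, x̄rλȳ ↝′ x̄ȳ, x̄λrȳ ↝′ x̄ȳ,
x̄ρrȳ ↝′ x̄lȳ, x̄nnȳ ↝′ x̄ȳ. -/
inductive Step : Word → Word → Prop
  | llam (x y : Word) : Step (x ++ [.l, .lam] ++ y) (x ++ [.rho] ++ y)
  | rlam (x y : Word) : Step (x ++ [.r, .lam] ++ y) (x ++ y)
  | lamr (x y : Word) : Step (x ++ [.lam, .r] ++ y) (x ++ y)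
  | rhor (x y : Word) : Step (x ++ [.rho, .r] ++ y) (x ++ [.l] ++ y)
  | nn (x y : Word) : Step (x ++ [.n, .n] ++ y) (x ++ y)

/-- A word is reduced if no immediate reduction step applies to it. -/
def Reduced (w : Word) : Prop := ∀ v, ¬ Step w v

/-- Reduction ↝ is the reflexive-transitive closure of immediate reduction. -/
def Reduces : Word → Word → Prop := Relation.ReflTransGen Step

open Classical in
/-- red(w): the (unique) reduced word to which w reduces. -/
noncomputable def red (w : Word) : Word :=
  if h : ∃ v, Reduces w v ∧ Reduced v then h.choose else w

/-- `occUF p A w z`: atom p has an occurrence falling under the word z in the formula A,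
where A itself falls under w. -/
def occUF (p : ℕ) : Fml → Word → Word → Prop
  | .atom q, w, z => q = p ∧ z = w
  | .neg A, w, z => occUF p A (red (.n :: w)) z
  | .conj A B, w, z => occUF p A w z ∨ occUF p B w z
  | .disj A B, w, z => occUF p A w z ∨ occUF p B w z
  | .imp A B, w, z => occUF p A (red (.l :: w)) z ∨ occUF p B (red (.r :: w)) z
  | .fus A B, w, z => occUF p A (red (.lam :: w)) z ∨ occUF p B (red (.rho :: w)) z

/-- `occUB p X w z`: atom p has an occurrence falling under the word z in the bunch X,
where X itself falls under w. -/
def occUB (p : ℕ) : Bunch → Word → Word → Prop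
  | .fml A, w, z => occUF p A w z
  | .comma X Y, w, z => occUB p X w z ∨ occUB p Y w z
  | .semi X Y, w, z => occUB p X (red (.lam :: w)) z ∨ occUB p Y (red (.rho :: w)) z

/-! ### Auxiliary: rewriting toolkit -/

/-- Whether the two-letter window `a b` is a redex. -/
def badPair : Alpha → Alpha → Bool
  | .l, .lam => true
  | .r, .lam => true
  | .lam, .r => true
  | .rho, .r => true
  | .n, .n => true
  | _, _ => false

/-- One-step prepend-and-normalize on a reduced word. -/
def prep (a : Alpha) (x : Word) : Word :=
  match a, x with
  | .l, .lam :: w => .rho :: w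
  | .r, .lam :: w => w
  | .lam, .r :: w => w
  | .rho, .r :: w => .l :: w
  | .n, .n :: w => w
  | _, _ => a :: x

lemma step_cons {a : Alpha} {x v : Word} (h : Step x v) : Step (a :: x) (a :: v) := by
  cases h with
  | llam x y => simpa using Step.llam (a :: x) y
  | rlam x y => simpa using Step.rlam (a :: x) y
  | lamr x y => simpa using Step.lamr (a :: x) y
  | rhor x y => simpa using Step.rhor (a :: x) y
  | nn x y => simpa using Step.nn (a :: x) y

lemma step_inv {w v : Word} (h : Step w v) :
    ∃ xs ys, (w = xs ++ [Alpha.l, .lam] ++ ys ∧ v = xs ++ [Alpha.rho] ++ ys) ∨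
      (w = xs ++ [Alpha.r, .lam] ++ ys ∧ v = xs ++ ys) ∨
      (w = xs ++ [Alpha.lam, .r] ++ ys ∧ v = xs ++ ys) ∨
      (w = xs ++ [Alpha.rho, .r] ++ ys ∧ v = xs ++ [Alpha.l] ++ ys) ∨
      (w = xs ++ [Alpha.n, .n] ++ ys ∧ v = xs ++ ys) := by
  cases h with
  | llam x y => exact ⟨x, y, Or.inl ⟨rfl, rfl⟩⟩
  | rlam x y => exact ⟨x, y, Or.inr (Or.inl ⟨rfl, rfl⟩)⟩
  | lamr x y => exact ⟨x, y, Or.inr (Or.inr (Or.inl ⟨rfl, rfl⟩))⟩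
  | rhor x y => exact ⟨x, y, Or.inr (Or.inr (Or.inr (Or.inl ⟨rfl, rfl⟩)))⟩
  | nn x y => exact ⟨x, y, Or.inr (Or.inr (Or.inr (Or.inr ⟨rfl, rfl⟩)))⟩

lemma reduced_nil : Reduced ([] : Word) := by
  intro v h
  rcases step_inv h with ⟨xs, ys, h | h | h | h | h⟩ <;>
    · have := congrArg List.length h.1
      simp only [List.length_nil, List.length_append, List.length_cons] at this
      omega


lemma step_cons_cases {a : Alpha} {x v : Word} (h : Step (a :: x) v) :
    (∃ w, a = .l ∧ x = .lam :: w ∧ v = .rho :: w) ∨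
    (∃ w, a = .r ∧ x = .lam :: w ∧ v = w) ∨
    (∃ w, a = .lam ∧ x = .r :: w ∧ v = w) ∨
    (∃ w, a = .rho ∧ x = .r :: w ∧ v = .l :: w) ∨
    (∃ w, a = .n ∧ x = .n :: w ∧ v = w) ∨
    (∃ v', Step x v' ∧ v = a :: v') := by
  rcases step_inv h with ⟨xs, ys, hc | hc | hc | hc | hc⟩ <;> obtain ⟨h1, h2⟩ := hc
  · rcases xs with _ | ⟨c, xs⟩
    · simp only [List.nil_append, List.cons_append, List.cons.injEq] at h1
      obtain ⟨rfl, rfl⟩ := h1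
      exact Or.inl ⟨ys, rfl, rfl, by simpa using h2⟩
    · simp only [List.cons_append, List.cons.injEq] at h1
      obtain ⟨rfl, rfl⟩ := h1
      subst h2
      exact Or.inr (Or.inr (Or.inr (Or.inr (Or.inr
        ⟨xs ++ [Alpha.rho] ++ ys, Step.llam xs ys, by simp⟩))))
  · rcases xs with _ | ⟨c, xs⟩
    · simp only [List.nil_append, List.cons_append, List.cons.injEq] at h1
      obtain ⟨rfl, rfl⟩ := h1
      exact Or.inr (Or.inl ⟨ys, rfl, rfl, by simpa using h2⟩)
    · simp only [List.cons_append, List.cons.injEq] at h1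
      obtain ⟨rfl, rfl⟩ := h1
      subst h2
      exact Or.inr (Or.inr (Or.inr (Or.inr (Or.inr
        ⟨xs ++ ys, Step.rlam xs ys, by simp⟩))))
  · rcases xs with _ | ⟨c, xs⟩
    · simp only [List.nil_append, List.cons_append, List.cons.injEq] at h1
      obtain ⟨rfl, rfl⟩ := h1
      exact Or.inr (Or.inr (Or.inl ⟨ys, rfl, rfl, by simpa using h2⟩))
    · simp only [List.cons_append, List.cons.injEq] at h1
      obtain ⟨rfl, rfl⟩ := h1
      subst h2
      exact Or.inr (Or.inr (Or.inr (Or.inr (Or.inr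
        ⟨xs ++ ys, Step.lamr xs ys, by simp⟩))))
  · rcases xs with _ | ⟨c, xs⟩
    · simp only [List.nil_append, List.cons_append, List.cons.injEq] at h1
      obtain ⟨rfl, rfl⟩ := h1
      exact Or.inr (Or.inr (Or.inr (Or.inl ⟨ys, rfl, rfl, by simpa using h2⟩)))
    · simp only [List.cons_append, List.cons.injEq] at h1
      obtain ⟨rfl, rfl⟩ := h1
      subst h2
      exact Or.inr (Or.inr (Or.inr (Or.inr (Or.inr
        ⟨xs ++ [Alpha.l] ++ ys, Step.rhor xs ys, by simp⟩))))
  · rcases xs with _ | ⟨c, xs⟩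
    · simp only [List.nil_append, List.cons_append, List.cons.injEq] at h1
      obtain ⟨rfl, rfl⟩ := h1
      exact Or.inr (Or.inr (Or.inr (Or.inr (Or.inl ⟨ys, rfl, rfl, by simpa using h2⟩))))
    · simp only [List.cons_append, List.cons.injEq] at h1
      obtain ⟨rfl, rfl⟩ := h1
      subst h2
      exact Or.inr (Or.inr (Or.inr (Or.inr (Or.inr
        ⟨xs ++ ys, Step.nn xs ys, by simp⟩))))

lemma reduced_tail {a : Alpha} {x : Word} (h : Reduced (a :: x)) : Reduced x :=
  fun v hv => h (a :: v) (step_cons hv)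

lemma front_step {a b : Alpha} {w : Word} (hb : badPair a b = true) :
    Step (a :: b :: w) (prep a (b :: w)) := by
  cases a <;> cases b <;> simp [badPair] at hb <;> simp only [prep]
  · exact Step.llam [] w
  · exact Step.rlam [] w
  · exact Step.lamr [] w
  · exact Step.rhor [] w
  · exact Step.nn [] w

lemma front_not_bad {a b : Alpha} {w : Word} (h : Reduced (a :: b :: w)) :
    badPair a b = false := by
  by_contra hb
  simp only [Bool.not_eq_false] at hb
  exact h _ (front_step hb)

lemma reduced_cons {a : Alpha} {x : Word} (hx : Reduced x)
    (hf : ∀ b w, x = b :: w → badPair a b = false) : Reduced (a :: x) := by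
  intro v hv
  rcases step_cons_cases hv with ⟨w, rfl, rfl, rfl⟩ | ⟨w, rfl, rfl, rfl⟩ |
    ⟨w, rfl, rfl, rfl⟩ | ⟨w, rfl, rfl, rfl⟩ | ⟨w, rfl, rfl, rfl⟩ | ⟨v', hs, rfl⟩
  · exact absurd (hf _ _ rfl) (by simp [badPair])
  · exact absurd (hf _ _ rfl) (by simp [badPair])
  · exact absurd (hf _ _ rfl) (by simp [badPair])
  · exact absurd (hf _ _ rfl) (by simp [badPair])
  · exact absurd (hf _ _ rfl) (by simp [badPair])
  · exact hx _ hs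

lemma prep_eq_or_step (a : Alpha) (x : Word) :
    prep a x = a :: x ∨ Step (a :: x) (prep a x) := by
  rcases x with _ | ⟨b, w⟩
  · left; cases a <;> rfl
  · by_cases hb : badPair a b = true
    · exact Or.inr (front_step hb)
    · left
      cases a <;> cases b <;> simp [badPair] at hb <;> rfl

lemma prep_reduced {a : Alpha} {x : Word} (hx : Reduced x) : Reduced (prep a x) := by
  rcases x with _ | ⟨b, w⟩
  · have : prep a ([] : Word) = [a] := by cases a <;> rfl
    rw [this]
    exact reduced_cons reduced_nil (by intro b w h; cases h)
  · have hw : Reduced w := reduced_tail hx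
    by_cases hb : badPair a b = true
    · -- prep does a front reduction
      cases a <;> cases b <;> simp [badPair] at hb <;> simp only [prep]
      · -- l lam => rho :: w
        refine reduced_cons hw ?_
        rintro c w' rfl
        have := front_not_bad (w := w') (a := .lam) (b := c) hx
        cases c <;> simp [badPair] at this ⊢
      · exact hw
      · exact hw
      · -- rho r => l :: w
        refine reduced_cons hw ?_
        rintro c w' rfl
        have := front_not_bad (w := w') (a := .r) (b := c) hx
        cases c <;> simp [badPair] at this ⊢
      · exact hw
    · have : prep a (b :: w) = a :: b :: w := by
        cases a <;> cases b <;> simp [badPair] at hb <;> rfl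
      rw [this]
      refine reduced_cons hx ?_
      rintro c w' h
      cases h
      simpa [Bool.not_eq_true] using hb

lemma reduces_reduced_eq {u v : Word} (hu : Reduced u) (h : Reduces u v) : v = u := by
  rcases (Relation.ReflTransGen.cases_head h) with rfl | ⟨w, hw, _⟩
  · rfl
  · exact absurd hw (hu w)

lemma step_unique {a : Alpha} {x v : Word} (hx : Reduced x) (h : Step (a :: x) v) :
    v = prep a x := by
  rcases step_cons_cases h with ⟨w, rfl, rfl, rfl⟩ | ⟨w, rfl, rfl, rfl⟩ |
    ⟨w, rfl, rfl, rfl⟩ | ⟨w, rfl, rfl, rfl⟩ | ⟨w, rfl, rfl, rfl⟩ | ⟨v', hs, rfl⟩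
  · rfl
  · rfl
  · rfl
  · rfl
  · rfl
  · exact absurd hs (hx v')

lemma red_of_reduced {x : Word} (hx : Reduced x) : red x = x := by
  unfold red
  split
  · next hex => exact reduces_reduced_eq hx hex.choose_spec.1
  · rfl

lemma red_cons {a : Alpha} {x : Word} (hx : Reduced x) : red (a :: x) = prep a x := by
  have hex : ∃ v, Reduces (a :: x) v ∧ Reduced v := by
    refine ⟨prep a x, ?_, prep_reduced hx⟩
    rcases prep_eq_or_step a x with he | hs
    · rw [he]
      exact Relation.ReflTransGen.refl
    · exact Relation.ReflTransGen.single hs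
  unfold red
  rw [dif_pos hex]
  have hspec := hex.choose_spec
  rcases (Relation.ReflTransGen.cases_head hspec.1) with he | ⟨w, hw, hwc⟩
  · -- choose = a :: x, so a :: x is reduced
    rcases prep_eq_or_step a x with he2 | hs
    · rw [he2]; exact he.symm
    · exact absurd (he ▸ hs) (hspec.2 _)
  · have hw' : w = prep a x := step_unique hx hw
    subst hw'
    exact reduces_reduced_eq (prep_reduced hx) hwc

lemma prep_nonbad {a : Alpha} {x : Word} (h : ∀ b w, x = b :: w → badPair a b = false) :
    prep a x = a :: x := by
  rcases x with _ | ⟨b, w⟩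
  · cases a <;> rfl
  · have := h b w rfl
    cases a <;> cases b <;> simp [badPair] at this <;> rfl

lemma not_head_r_of_red_lam {w : Word} (h : Reduced (.lam :: w)) :
    ∀ c w', w = c :: w' → badPair .lam c = false := by
  rintro c w' rfl
  exact front_not_bad h

lemma prep_lam_r {x : Word} (hx : Reduced x) : prep .lam (prep .r x) = x := by
  rcases x with _ | ⟨b, w⟩
  · rfl
  · rcases b with _ | _ | _ | _ | _
    · rfl
    · rfl
    · -- x = lam :: w : prep r x = w; prep lam w = lam :: w  (w can't start with r)
      show prep .lam w = .lam :: w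
      refine prep_nonbad ?_
      rintro c w' rfl
      exact front_not_bad hx
    · rfl
    · rfl

lemma prep_rho_r {x : Word} (hx : Reduced x) : prep .rho (prep .r x) = prep .l x := by
  rcases x with _ | ⟨b, w⟩
  · rfl
  · rcases b with _ | _ | _ | _ | _
    · rfl
    · rfl
    · -- x = lam :: w; LHS: prep rho w ; RHS: prep l (lam::w) = rho :: w
      show prep .rho w = .rho :: w
      refine prep_nonbad ?_
      rintro c w' rfl
      have := front_not_bad hx
      cases c <;> simp_all [badPair]
    · rfl
    · rfl

lemma prep_l_lam {x : Word} (hx : Reduced x) : prep .l (prep .lam x) = prep .rho x := by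
  rcases x with _ | ⟨b, w⟩
  · rfl
  · rcases b with _ | _ | _ | _ | _
    · rfl
    · -- x = r :: w; LHS: prep l w ; RHS: prep rho (r::w) = l :: w
      show prep .l w = .l :: w
      refine prep_nonbad ?_
      rintro c w' rfl
      have := front_not_bad hx
      cases c <;> simp_all [badPair]
    · rfl
    · rfl
    · rfl

lemma prep_r_lam {x : Word} (hx : Reduced x) : prep .r (prep .lam x) = x := by
  rcases x with _ | ⟨b, w⟩
  · rfl
  · rcases b with _ | _ | _ | _ | _
    · rfl
    · -- x = r :: w; LHS: prep r w = r :: w  (w can't start with lam)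
      show prep .r w = .r :: w
      refine prep_nonbad ?_
      rintro c w' rfl
      have := front_not_bad hx
      cases c <;> simp_all [badPair]
    · rfl
    · rfl
    · rfl

lemma prep_n_n {x : Word} (hx : Reduced x) : prep .n (prep .n x) = x := by
  rcases x with _ | ⟨b, w⟩
  · rfl
  · rcases b with _ | _ | _ | _ | _
    · rfl
    · rfl
    · rfl
    · rfl
    · -- x = n :: w; LHS: prep n w = n :: w (w can't start with n)
      show prep .n w = .n :: w
      refine prep_nonbad ?_
      rintro c w' rfl
      have := front_not_bad hx
      cases c <;> simp_all [badPair]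

/-! ### red-identities -/

lemma red_cons_reduced (a : Alpha) {x : Word} (hx : Reduced x) : Reduced (red (a :: x)) := by
  rw [red_cons hx]; exact prep_reduced hx

lemma red2_lam_r {x : Word} (hx : Reduced x) : red (.lam :: red (.r :: x)) = x := by
  rw [red_cons hx, red_cons (prep_reduced hx), prep_lam_r hx]

lemma red2_rho_r {x : Word} (hx : Reduced x) : red (.rho :: red (.r :: x)) = red (.l :: x) := by
  rw [red_cons hx, red_cons (prep_reduced hx), prep_rho_r hx, red_cons hx]

lemma red2_l_lam {x : Word} (hx : Reduced x) : red (.l :: red (.lam :: x)) = red (.rho :: x) := by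
  rw [red_cons hx, red_cons (prep_reduced hx), prep_l_lam hx, red_cons hx]

lemma red2_r_lam {x : Word} (hx : Reduced x) : red (.r :: red (.lam :: x)) = x := by
  rw [red_cons hx, red_cons (prep_reduced hx), prep_r_lam hx]

lemma red2_n_n {x : Word} (hx : Reduced x) : red (.n :: red (.n :: x)) = x := by
  rw [red_cons hx, red_cons (prep_reduced hx), prep_n_n hx]

/-! ### the Boolean invariant -/

/-- Letter action: `lam`, `r` preserve, `n` flips, `l`, `rho` reset to the constant `c`. -/
def del (c : Bool) (a : Alpha) (b : Bool) : Bool :=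
  match a with
  | .lam => b
  | .r => b
  | .n => !b
  | .l => c
  | .rho => c

/-- The invariant: fold the letter actions over the word (rightmost letter first). -/
def Hc (c : Bool) (w : Word) : Bool := w.foldr (fun a b => del c a b) true

lemma Hc_nil (c : Bool) : Hc c [] = true := rfl

lemma Hc_cons (c : Bool) (a : Alpha) (x : Word) : Hc c (a :: x) = del c a (Hc c x) := rfl

lemma Hc_prep (c : Bool) (a : Alpha) (x : Word) : Hc c (prep a x) = del c a (Hc c x) := by
  rcases x with _ | ⟨b, w⟩
  · cases a <;> rfl
  · cases a <;> cases b <;> first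
      | rfl
      | (show Hc c w = !(!(Hc c w)); rw [Bool.not_not])

lemma Hc_red_cons (c : Bool) (a : Alpha) {x : Word} (hx : Reduced x) :
    Hc c (red (a :: x)) = del c a (Hc c x) := by
  rw [red_cons hx, Hc_prep]

/-! ### the semantics -/

/-- Two-barreled truth/falsity semantics for formulas, at a word, with valuations
`vp` (truth of atoms) and `vm` (falsity of atoms). -/
def TF (vp vm : ℕ → Word → Prop) : Fml → Word → Prop × Prop
  | .atom q, x => (vp q x, vm q x)
  | .neg A, x => ((TF vp vm A (red (.n :: x))).2, (TF vp vm A (red (.n :: x))).1)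
  | .conj A B, x =>
      ((TF vp vm A x).1 ∧ (TF vp vm B x).1, (TF vp vm A x).2 ∨ (TF vp vm B x).2)
  | .disj A B, x =>
      ((TF vp vm A x).1 ∨ (TF vp vm B x).1, (TF vp vm A x).2 ∧ (TF vp vm B x).2)
  | .imp A B, x =>
      ((TF vp vm A (red (.l :: x))).1 → (TF vp vm B (red (.r :: x))).1,
        ¬ (TF vp vm A (red (.l :: x))).2 ∧ (TF vp vm B (red (.r :: x))).2)
  | .fus A B, x =>
      ((TF vp vm A (red (.lam :: x))).1 ∧ (TF vp vm B (red (.rho :: x))).1,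
        (TF vp vm A (red (.lam :: x))).2 ∨ (TF vp vm B (red (.rho :: x))).2)

/-- The semantics extended to bunches. -/
def TB (vp vm : ℕ → Word → Prop) : Bunch → Word → Prop × Prop
  | .fml A, x => TF vp vm A x
  | .comma X Y, x =>
      ((TB vp vm X x).1 ∧ (TB vp vm Y x).1, (TB vp vm X x).2 ∨ (TB vp vm Y x).2)
  | .semi X Y, x =>
      ((TB vp vm X (red (.lam :: x))).1 ∧ (TB vp vm Y (red (.rho :: x))).1,
        (TB vp vm X (red (.lam :: x))).2 ∨ (TB vp vm Y (red (.rho :: x))).2)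

/-! ### context lemmas -/

section Ctx
variable (vp vm : ℕ → Word → Prop)

lemma fill_T_mono {U V : Bunch}
    (h : ∀ y, Reduced y → (TB vp vm U y).1 → (TB vp vm V y).1) :
    ∀ (c : Ctx) (x : Word), Reduced x →
      (TB vp vm (c.fill U) x).1 → (TB vp vm (c.fill V) x).1 := by
  intro c
  induction c with
  | hole => exact h
  | commaL c Y ih => exact fun x hx hT => ⟨ih x hx hT.1, hT.2⟩
  | commaR Y c ih => exact fun x hx hT => ⟨hT.1, ih x hx hT.2⟩
  | semiL c Y ih => exact fun x hx hT => ⟨ih _ (red_cons_reduced _ hx) hT.1, hT.2⟩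
  | semiR Y c ih => exact fun x hx hT => ⟨hT.1, ih _ (red_cons_reduced _ hx) hT.2⟩

lemma fill_F_anti {U V : Bunch}
    (h : ∀ y, Reduced y → (TB vp vm V y).2 → (TB vp vm U y).2) :
    ∀ (c : Ctx) (x : Word), Reduced x →
      (TB vp vm (c.fill V) x).2 → (TB vp vm (c.fill U) x).2 := by
  intro c
  induction c with
  | hole => exact h
  | commaL c Y ih =>
      exact fun x hx hF => hF.elim (fun h1 => Or.inl (ih x hx h1)) Or.inr
  | commaR Y c ih =>
      exact fun x hx hF => hF.elim Or.inl (fun h1 => Or.inr (ih x hx h1))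
  | semiL c Y ih =>
      exact fun x hx hF => hF.elim (fun h1 => Or.inl (ih _ (red_cons_reduced _ hx) h1)) Or.inr
  | semiR Y c ih =>
      exact fun x hx hF => hF.elim Or.inl (fun h1 => Or.inr (ih _ (red_cons_reduced _ hx) h1))

lemma fill_T_or {U V W : Bunch}
    (h : ∀ y, Reduced y → (TB vp vm U y).1 → (TB vp vm V y).1 ∨ (TB vp vm W y).1) :
    ∀ (c : Ctx) (x : Word), Reduced x →
      (TB vp vm (c.fill U) x).1 →
        (TB vp vm (c.fill V) x).1 ∨ (TB vp vm (c.fill W) x).1 := by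
  intro c
  induction c with
  | hole => exact h
  | commaL c Y ih =>
      exact fun x hx hT =>
        (ih x hx hT.1).elim (fun h1 => Or.inl ⟨h1, hT.2⟩) (fun h1 => Or.inr ⟨h1, hT.2⟩)
  | commaR Y c ih =>
      exact fun x hx hT =>
        (ih x hx hT.2).elim (fun h1 => Or.inl ⟨hT.1, h1⟩) (fun h1 => Or.inr ⟨hT.1, h1⟩)
  | semiL c Y ih =>
      exact fun x hx hT =>
        (ih _ (red_cons_reduced _ hx) hT.1).elim
          (fun h1 => Or.inl ⟨h1, hT.2⟩) (fun h1 => Or.inr ⟨h1, hT.2⟩)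
  | semiR Y c ih =>
      exact fun x hx hT =>
        (ih _ (red_cons_reduced _ hx) hT.2).elim
          (fun h1 => Or.inl ⟨hT.1, h1⟩) (fun h1 => Or.inr ⟨hT.1, h1⟩)

lemma fill_F_and {U V W : Bunch}
    (h : ∀ y, Reduced y → (TB vp vm V y).2 → (TB vp vm W y).2 → (TB vp vm U y).2) :
    ∀ (c : Ctx) (x : Word), Reduced x →
      (TB vp vm (c.fill V) x).2 → (TB vp vm (c.fill W) x).2 →
        (TB vp vm (c.fill U) x).2 := by
  intro c
  induction c with
  | hole => exact h
  | commaL c Y ih =>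
      rintro x hx (h1 | h1) (h2 | h2)
      · exact Or.inl (ih x hx h1 h2)
      · exact Or.inr h2
      · exact Or.inr h1
      · exact Or.inr h1
  | commaR Y c ih =>
      rintro x hx (h1 | h1) (h2 | h2)
      · exact Or.inl h1
      · exact Or.inl h1
      · exact Or.inl h2
      · exact Or.inr (ih x hx h1 h2)
  | semiL c Y ih =>
      rintro x hx (h1 | h1) (h2 | h2)
      · exact Or.inl (ih _ (red_cons_reduced _ hx) h1 h2)
      · exact Or.inr h2
      · exact Or.inr h1
      · exact Or.inr h1
  | semiR Y c ih =>
      rintro x hx (h1 | h1) (h2 | h2)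
      · exact Or.inl h1
      · exact Or.inl h1
      · exact Or.inl h2
      · exact Or.inr (ih _ (red_cons_reduced _ hx) h1 h2)

end Ctx

/-! ### soundness of NDB for the semantics -/

theorem soundTF {X : Bunch} {A : Fml} (h : NDB X A) :
    ∀ (vp vm : ℕ → Word → Prop) (x : Word), Reduced x →
      ((TB vp vm X x).1 → (TF vp vm A x).1) ∧
      ((TF vp vm A x).2 → (TB vp vm X x).2) := by
  induction h with
  | id A => exact fun vp vm x hx => ⟨fun t => t, fun f => f⟩
  | @impI X A B _ ih =>
      intro vp vm x hx
      constructor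
      · intro hT hA
        have h1 := (ih vp vm (red (.r :: x)) (red_cons_reduced _ hx)).1
        have h2 : (TB vp vm (Bunch.semi X (.fml A)) (red (.r :: x))).1 := by
          show (TB vp vm X (red (.lam :: red (.r :: x)))).1 ∧
            (TF vp vm A (red (.rho :: red (.r :: x)))).1
          rw [red2_lam_r hx, red2_rho_r hx]
          exact ⟨hT, hA⟩
        exact h1 h2
      · rintro ⟨hnA, hB⟩
        have h2 := (ih vp vm (red (.r :: x)) (red_cons_reduced _ hx)).2 hB
        have h3 : (TB vp vm X (red (.lam :: red (.r :: x)))).2 ∨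
            (TF vp vm A (red (.rho :: red (.r :: x)))).2 := h2
        rw [red2_lam_r hx, red2_rho_r hx] at h3
        exact h3.elim (fun h => h) (fun h => absurd h hnA)
  | @impE X Y A B _ _ ih1 ih2 =>
      intro vp vm x hx
      constructor
      · rintro ⟨hX, hY⟩
        have h1 := (ih1 vp vm (red (.lam :: x)) (red_cons_reduced _ hx)).1 hX
        have h1' : (TF vp vm A (red (.l :: red (.lam :: x)))).1 →
            (TF vp vm B (red (.r :: red (.lam :: x)))).1 := h1
        rw [red2_l_lam hx, red2_r_lam hx] at h1'
        exact h1' ((ih2 vp vm (red (.rho :: x)) (red_cons_reduced _ hx)).1 hY)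
      · intro hB
        by_cases hA : (TF vp vm A (red (.rho :: x))).2
        · exact Or.inr ((ih2 vp vm (red (.rho :: x)) (red_cons_reduced _ hx)).2 hA)
        · refine Or.inl ((ih1 vp vm (red (.lam :: x)) (red_cons_reduced _ hx)).2 ?_)
          show ¬ (TF vp vm A (red (.l :: red (.lam :: x)))).2 ∧
            (TF vp vm B (red (.r :: red (.lam :: x)))).2
          rw [red2_l_lam hx, red2_r_lam hx]
          exact ⟨hA, hB⟩
  | @orI1 X A B _ ih =>
      intro vp vm x hx
      exact ⟨fun hT => Or.inl ((ih vp vm x hx).1 hT), fun hF => (ih vp vm x hx).2 hF.1⟩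
  | @orI2 X B A _ ih =>
      intro vp vm x hx
      exact ⟨fun hT => Or.inr ((ih vp vm x hx).1 hT), fun hF => (ih vp vm x hx).2 hF.2⟩
  | @orE X A B C Y _ _ _ ih1 ih2 ih3 =>
      intro vp vm x hx
      constructor
      · intro hT
        have hor := fill_T_or vp vm (U := X) (V := .fml A) (W := .fml B)
          (fun y hy hU => (ih1 vp vm y hy).1 hU) Y x hx hT
        exact hor.elim (fun h => (ih2 vp vm x hx).1 h) (fun h => (ih3 vp vm x hx).1 h)
      · intro hC
        exact fill_F_and vp vm (U := X) (V := .fml A) (W := .fml B)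
          (fun y hy hA hB => (ih1 vp vm y hy).2 ⟨hA, hB⟩) Y x hx
          ((ih2 vp vm x hx).2 hC) ((ih3 vp vm x hx).2 hC)
  | @andI X Y A B _ _ ih1 ih2 =>
      intro vp vm x hx
      constructor
      · rintro ⟨hX, hY⟩
        exact ⟨(ih1 vp vm x hx).1 hX, (ih2 vp vm x hx).1 hY⟩
      · rintro (hA | hB)
        · exact Or.inl ((ih1 vp vm x hx).2 hA)
        · exact Or.inr ((ih2 vp vm x hx).2 hB)
  | @andE X A B C Y _ _ ih1 ih2 =>
      intro vp vm x hx
      constructor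
      · intro hT
        refine (ih2 vp vm x hx).1 (fill_T_mono vp vm (U := X)
          (V := .comma (.fml A) (.fml B)) (fun y hy hU => (ih1 vp vm y hy).1 hU) Y x hx hT)
      · intro hC
        exact fill_F_anti vp vm (U := X) (V := .comma (.fml A) (.fml B))
          (fun y hy hV => (ih1 vp vm y hy).2 hV) Y x hx ((ih2 vp vm x hx).2 hC)
  | @fusI X Y A B _ _ ih1 ih2 =>
      intro vp vm x hx
      constructor
      · rintro ⟨hX, hY⟩
        exact ⟨(ih1 vp vm _ (red_cons_reduced _ hx)).1 hX,
          (ih2 vp vm _ (red_cons_reduced _ hx)).1 hY⟩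
      · rintro (hA | hB)
        · exact Or.inl ((ih1 vp vm _ (red_cons_reduced _ hx)).2 hA)
        · exact Or.inr ((ih2 vp vm _ (red_cons_reduced _ hx)).2 hB)
  | @fusE X A B C Y _ _ ih1 ih2 =>
      intro vp vm x hx
      constructor
      · intro hT
        refine (ih2 vp vm x hx).1 (fill_T_mono vp vm (U := X)
          (V := .semi (.fml A) (.fml B)) (fun y hy hU => (ih1 vp vm y hy).1 hU) Y x hx hT)
      · intro hC
        exact fill_F_anti vp vm (U := X) (V := .semi (.fml A) (.fml B))
          (fun y hy hV => (ih1 vp vm y hy).2 hV) Y x hx ((ih2 vp vm x hx).2 hC)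
  | @negI X A B _ _ ih1 ih2 =>
      intro vp vm x hx
      constructor
      · intro hT
        have hB := (ih1 vp vm x hx).1 hT
        have h2 := (ih2 vp vm (red (.n :: x)) (red_cons_reduced _ hx)).2
        have h2' : (TF vp vm B (red (.n :: red (.n :: x)))).1 →
            (TF vp vm A (red (.n :: x))).2 := h2
        rw [red2_n_n hx] at h2'
        exact h2' hB
      · intro hF
        have h1 := (ih2 vp vm (red (.n :: x)) (red_cons_reduced _ hx)).1 hF
        have h1' : (TF vp vm B (red (.n :: red (.n :: x)))).2 := h1
        rw [red2_n_n hx] at h1'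
        exact (ih1 vp vm x hx).2 h1'
  | @negE X A _ ih =>
      intro vp vm x hx
      constructor
      · intro hT
        have h1 := (ih vp vm x hx).1 hT
        have h1' : (TF vp vm A (red (.n :: red (.n :: x)))).1 := h1
        rwa [red2_n_n hx] at h1'
      · intro hF
        refine (ih vp vm x hx).2 ?_
        show (TF vp vm A (red (.n :: red (.n :: x)))).2
        rw [red2_n_n hx]
        exact hF
  | @cut X A B Y _ _ ih1 ih2 =>
      intro vp vm x hx
      constructor
      · intro hT
        exact (ih2 vp vm x hx).1 (fill_T_mono vp vm (U := X) (V := .fml A)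
          (fun y hy hU => (ih1 vp vm y hy).1 hU) Y x hx hT)
      · intro hB
        exact fill_F_anti vp vm (U := X) (V := .fml A)
          (fun y hy hV => (ih1 vp vm y hy).2 hV) Y x hx ((ih2 vp vm x hx).2 hB)
  | @eB W X Y Z A _ ih =>
      intro vp vm x hx
      constructor
      · intro hT
        refine (ih vp vm x hx).1 (fill_T_mono vp vm
          (U := .comma (.comma X Y) Z) (V := .comma X (.comma Y Z))
          (fun y hy hU => ⟨hU.1.1, hU.1.2, hU.2⟩) W x hx hT)
      · intro hA
        refine fill_F_anti vp vm
          (U := .comma (.comma X Y) Z) (V := .comma X (.comma Y Z))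
          (fun y hy hV => ?_) W x hx ((ih vp vm x hx).2 hA)
        rcases hV with h | h | h
        · exact Or.inl (Or.inl h)
        · exact Or.inl (Or.inr h)
        · exact Or.inr h
  | @eC W X Y A _ ih =>
      intro vp vm x hx
      constructor
      · intro hT
        refine (ih vp vm x hx).1 (fill_T_mono vp vm
          (U := .comma Y X) (V := .comma X Y)
          (fun y hy hU => ⟨hU.2, hU.1⟩) W x hx hT)
      · intro hA
        exact fill_F_anti vp vm (U := .comma Y X) (V := .comma X Y)
          (fun y hy hV => hV.elim Or.inr Or.inl) W x hx ((ih vp vm x hx).2 hA)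
  | @eW W X A _ ih =>
      intro vp vm x hx
      constructor
      · intro hT
        refine (ih vp vm x hx).1 (fill_T_mono vp vm
          (U := X) (V := .comma X X) (fun y hy hU => ⟨hU, hU⟩) W x hx hT)
      · intro hA
        exact fill_F_anti vp vm (U := X) (V := .comma X X)
          (fun y hy hV => hV.elim (fun h => h) (fun h => h)) W x hx ((ih vp vm x hx).2 hA)
  | @eK W X Y A _ ih =>
      intro vp vm x hx
      constructor
      · intro hT
        refine (ih vp vm x hx).1 (fill_T_mono vp vm
          (U := .comma X Y) (V := X) (fun y hy hU => hU.1) W x hx hT)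
      · intro hA
        exact fill_F_anti vp vm (U := .comma X Y) (V := X)
          (fun y hy hV => Or.inl hV) W x hx ((ih vp vm x hx).2 hA)

/-! ### the canonical valuations -/

/-- Truth valuation for atoms determined by the invariant. -/
def vT (c : Bool) : ℕ → Word → Prop := fun _ z => Hc c z = c
/-- Falsity valuation for atoms determined by the invariant. -/
def vF (c : Bool) : ℕ → Word → Prop := fun _ z => Hc c z = !c

lemma lemV (c : Bool) : ∀ (A : Fml) (x : Word), Reduced x →
    ((TF (vT c) (vF c) A x).1 ↔ Hc c x = c) ∧
    ((TF (vT c) (vF c) A x).2 ↔ Hc c x = !c) := by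
  intro A
  induction A with
  | atom q => exact fun x hx => ⟨Iff.rfl, Iff.rfl⟩
  | neg A ih =>
      intro x hx
      have h := ih (red (.n :: x)) (red_cons_reduced _ hx)
      rw [Hc_red_cons _ _ hx] at h
      have hgoal : ((TF (vT c) (vF c) A (red (.n :: x))).2 ↔ Hc c x = c) ∧
          ((TF (vT c) (vF c) A (red (.n :: x))).1 ↔ Hc c x = !c) := by
        cases hb : Hc c x <;> cases c <;> simp_all [del]
      exact hgoal
  | conj A B ihA ihB =>
      intro x hx
      have hA := ihA x hx
      have hB := ihB x hx
      constructor
      · show (TF (vT c) (vF c) A x).1 ∧ (TF (vT c) (vF c) B x).1 ↔ _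
        rw [hA.1, hB.1, and_self]
      · show (TF (vT c) (vF c) A x).2 ∨ (TF (vT c) (vF c) B x).2 ↔ _
        rw [hA.2, hB.2, or_self]
  | disj A B ihA ihB =>
      intro x hx
      have hA := ihA x hx
      have hB := ihB x hx
      constructor
      · show (TF (vT c) (vF c) A x).1 ∨ (TF (vT c) (vF c) B x).1 ↔ _
        rw [hA.1, hB.1, or_self]
      · show (TF (vT c) (vF c) A x).2 ∧ (TF (vT c) (vF c) B x).2 ↔ _
        rw [hA.2, hB.2, and_self]
  | imp A B ihA ihB =>
      intro x hx
      have hA := ihA (red (.l :: x)) (red_cons_reduced _ hx)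
      have hB := ihB (red (.r :: x)) (red_cons_reduced _ hx)
      rw [Hc_red_cons _ _ hx] at hA hB
      constructor
      · show ((TF (vT c) (vF c) A (red (.l :: x))).1 → (TF (vT c) (vF c) B (red (.r :: x))).1) ↔ _
        rw [hA.1, hB.1]
        cases hb : Hc c x <;> cases c <;> simp [del]
      · show (¬ (TF (vT c) (vF c) A (red (.l :: x))).2 ∧ (TF (vT c) (vF c) B (red (.r :: x))).2) ↔ _
        rw [hA.2, hB.2]
        cases hb : Hc c x <;> cases c <;> simp [del]
  | fus A B ihA ihB =>
      intro x hx
      have hA := ihA (red (.lam :: x)) (red_cons_reduced _ hx)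
      have hB := ihB (red (.rho :: x)) (red_cons_reduced _ hx)
      rw [Hc_red_cons _ _ hx] at hA hB
      constructor
      · show ((TF (vT c) (vF c) A (red (.lam :: x))).1 ∧ (TF (vT c) (vF c) B (red (.rho :: x))).1) ↔ _
        rw [hA.1, hB.1]
        cases hb : Hc c x <;> cases c <;> simp [del]
      · show ((TF (vT c) (vF c) A (red (.lam :: x))).2 ∨ (TF (vT c) (vF c) B (red (.rho :: x))).2) ↔ _
        rw [hA.2, hB.2]
        cases hb : Hc c x <;> cases c <;> simp [del]

lemma lemVB (c : Bool) : ∀ (X : Bunch) (x : Word), Reduced x →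
    ((TB (vT c) (vF c) X x).1 ↔ Hc c x = c) ∧
    ((TB (vT c) (vF c) X x).2 ↔ Hc c x = !c) := by
  intro X
  induction X with
  | fml A => exact lemV c A
  | comma X Y ihX ihY =>
      intro x hx
      have hX := ihX x hx
      have hY := ihY x hx
      constructor
      · show (TB (vT c) (vF c) X x).1 ∧ (TB (vT c) (vF c) Y x).1 ↔ _
        rw [hX.1, hY.1, and_self]
      · show (TB (vT c) (vF c) X x).2 ∨ (TB (vT c) (vF c) Y x).2 ↔ _
        rw [hX.2, hY.2, or_self]
  | semi X Y ihX ihY =>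
      intro x hx
      have hX := ihX (red (.lam :: x)) (red_cons_reduced _ hx)
      have hY := ihY (red (.rho :: x)) (red_cons_reduced _ hx)
      rw [Hc_red_cons _ _ hx] at hX hY
      constructor
      · show ((TB (vT c) (vF c) X (red (.lam :: x))).1 ∧ (TB (vT c) (vF c) Y (red (.rho :: x))).1) ↔ _
        rw [hX.1, hY.1]
        cases hb : Hc c x <;> cases c <;> simp [del]
      · show ((TB (vT c) (vF c) X (red (.lam :: x))).2 ∨ (TB (vT c) (vF c) Y (red (.rho :: x))).2) ↔ _
        rw [hX.2, hY.2]
        cases hb : Hc c x <;> cases c <;> simp [del]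

/-! ### dependence of the semantics on occurrence values only -/

lemma TF_congr {vp vm vp' vm' : ℕ → Word → Prop} :
    ∀ (A : Fml) (x : Word),
      (∀ p z, occUF p A x z → ((vp p z ↔ vp' p z) ∧ (vm p z ↔ vm' p z))) →
      ((TF vp vm A x).1 ↔ (TF vp' vm' A x).1) ∧
      ((TF vp vm A x).2 ↔ (TF vp' vm' A x).2) := by
  intro A
  induction A with
  | atom q =>
      intro x hocc
      exact hocc q x ⟨rfl, rfl⟩
  | neg A ih =>
      intro x hocc
      have h := ih (red (.n :: x)) (fun p z hz => hocc p z hz)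
      exact ⟨h.2, h.1⟩
  | conj A B ihA ihB =>
      intro x hocc
      have hA := ihA x (fun p z hz => hocc p z (Or.inl hz))
      have hB := ihB x (fun p z hz => hocc p z (Or.inr hz))
      exact ⟨and_congr hA.1 hB.1, or_congr hA.2 hB.2⟩
  | disj A B ihA ihB =>
      intro x hocc
      have hA := ihA x (fun p z hz => hocc p z (Or.inl hz))
      have hB := ihB x (fun p z hz => hocc p z (Or.inr hz))
      exact ⟨or_congr hA.1 hB.1, and_congr hA.2 hB.2⟩
  | imp A B ihA ihB =>
      intro x hocc
      have hA := ihA (red (.l :: x)) (fun p z hz => hocc p z (Or.inl hz))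
      have hB := ihB (red (.r :: x)) (fun p z hz => hocc p z (Or.inr hz))
      exact ⟨imp_congr hA.1 hB.1, and_congr (not_congr hA.2) hB.2⟩
  | fus A B ihA ihB =>
      intro x hocc
      have hA := ihA (red (.lam :: x)) (fun p z hz => hocc p z (Or.inl hz))
      have hB := ihB (red (.rho :: x)) (fun p z hz => hocc p z (Or.inr hz))
      exact ⟨and_congr hA.1 hB.1, or_congr hA.2 hB.2⟩

lemma TB_congr {vp vm vp' vm' : ℕ → Word → Prop} :
    ∀ (X : Bunch) (x : Word),
      (∀ p z, occUB p X x z → ((vp p z ↔ vp' p z) ∧ (vm p z ↔ vm' p z))) →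
      ((TB vp vm X x).1 ↔ (TB vp' vm' X x).1) ∧
      ((TB vp vm X x).2 ↔ (TB vp' vm' X x).2) := by
  intro X
  induction X with
  | fml A => exact fun x hocc => TF_congr A x hocc
  | comma X Y ihX ihY =>
      intro x hocc
      have hX := ihX x (fun p z hz => hocc p z (Or.inl hz))
      have hY := ihY x (fun p z hz => hocc p z (Or.inr hz))
      exact ⟨and_congr hX.1 hY.1, or_congr hX.2 hY.2⟩
  | semi X Y ihX ihY =>
      intro x hocc
      have hX := ihX (red (.lam :: x)) (fun p z hz => hocc p z (Or.inl hz))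
      have hY := ihY (red (.rho :: x)) (fun p z hz => hocc p z (Or.inr hz))
      exact ⟨and_congr hX.1 hY.1, or_congr hX.2 hY.2⟩

/-- If X ⊩ A is provable in the natural deduction system B, then X and A rseq-share
a variable: some atom has occurrences in X and in A falling under the same reduced
word (the whole bunch and the whole formula falling under the empty word ε). -/
theorem NDB_rseq_variable_sharing (X : Bunch) (A : Fml) (h : NDB X A) :
    ∃ (p : ℕ) (z : Word), occUB p X [] z ∧ occUF p A [] z := by
  by_contra hno
  push_neg at hno
  classical
  set vp : ℕ → Word → Prop := fun p z =>
    (occUB p X [] z ∧ Hc true z = true) ∨ (¬ occUB p X [] z ∧ Hc false z = false) with hvp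
  set vm : ℕ → Word → Prop := fun p z =>
    (occUB p X [] z ∧ Hc true z = false) ∨ (¬ occUB p X [] z ∧ Hc false z = true) with hvm
  have hX : (TB vp vm X []).1 := by
    have hagree : ∀ p z, occUB p X [] z →
        ((vp p z ↔ vT true p z) ∧ (vm p z ↔ vF true p z)) := by
      intro p z hz
      constructor
      · constructor
        · rintro (⟨_, h1⟩ | ⟨hn, _⟩)
          · exact h1
          · exact absurd hz hn
        · intro h1
          exact Or.inl ⟨hz, h1⟩
      · constructor
        · rintro (⟨_, h1⟩ | ⟨hn, _⟩)
          · exact h1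
          · exact absurd hz hn
        · intro h1
          exact Or.inl ⟨hz, h1⟩
    have hc := (TB_congr X [] hagree).1
    rw [hc]
    exact ((lemVB true X [] reduced_nil).1).mpr rfl
  have hA : ¬ (TF vp vm A []).1 := by
    have hagree : ∀ p z, occUF p A [] z →
        ((vp p z ↔ vT false p z) ∧ (vm p z ↔ vF false p z)) := by
      intro p z hz
      have hnb : ¬ occUB p X [] z := fun hb => hno p z hb hz
      constructor
      · constructor
        · rintro (⟨hb, _⟩ | ⟨_, h1⟩)
          · exact absurd hb hnb
          · exact h1
        · intro h1
          exact Or.inr ⟨hnb, h1⟩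
      · constructor
        · rintro (⟨hb, _⟩ | ⟨_, h1⟩)
          · exact absurd hb hnb
          · exact h1
        · intro h1
          exact Or.inr ⟨hnb, h1⟩
    have hc := (TF_congr A [] hagree).1
    rw [hc]
    intro hT
    have := ((lemV false A [] reduced_nil).1).mp hT
    simp [Hc_nil] at this
  exact hA ((soundTF h vp vm [] reduced_nil).1 hX)
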